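/- Let P₁, …, P_n be real symmetric p×p matrices with Pᵢ² = Pᵢ and rank(Pᵢ) = k for all i, and let Ā = (1/n)·Σᵢ Pᵢ be their arithmetic mean. Let V_k be a real p×k matrix with V_kᵀV_k = I_k whose columns are eigenvectors of Ā associated with its k largest eigenvalues (so that Ā V_k = V_k Λ for a diagonal Λ), and set G = V_k V_kᵀ. Then (1/n)·Σᵢ 2·sym((I_p − G)(Pᵢ − G)G) = 0. Consequently the projection of the arithmetic mean onto the Grassmann manifold is the RL-barycenter of P₁, …, P_n for the projection retraction and the tangent-space-projection lifting. -/

import Mathlib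

open Matrix

/-- Symmetric part of a square matrix: `sym(M) = (M + Mᵀ)/2`. -/
noncomputable def symPart {p : ℕ} (M : Matrix (Fin p) (Fin p) ℝ) :
    Matrix (Fin p) (Fin p) ℝ :=
  (1 / 2 : ℝ) • (M + Mᵀ)

/-! The lifting `2·sym((I − G)(Pᵢ − G)G)` is linear in `Pᵢ` once the `G`-term is dropped
(it vanishes because `G` is idempotent), so the average of the liftings is the lifting
`2·sym((I − G) Ā G)` of the mean. That is zero because the column space of `Vk` is
`Ā`-invariant: `Ā G = Vk Λ Vkᵀ` and `(I − G) Vk = 0`. -/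

section Projector

variable {m r R : Type*} [Fintype m] [Fintype r] [DecidableEq r] [CommRing R]

theorem mul_transpose_mul_of_transpose_mul_eq_one {V : Matrix m r R}
    (hV : Vᵀ * V = 1) : (V * Vᵀ) * V = V := by
  rw [Matrix.mul_assoc, hV, Matrix.mul_one]

theorem one_sub_mul_transpose_mul_eq_zero [DecidableEq m] {V : Matrix m r R}
    (hV : Vᵀ * V = 1) : (1 - V * Vᵀ) * V = 0 := by
  rw [Matrix.sub_mul, Matrix.one_mul, mul_transpose_mul_of_transpose_mul_eq_one hV,
    sub_self]

theorem isIdempotentElem_mul_transpose {V : Matrix m r R} (hV : Vᵀ * V = 1) :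
    IsIdempotentElem (V * Vᵀ) := by
  rw [IsIdempotentElem, ← Matrix.mul_assoc, mul_transpose_mul_of_transpose_mul_eq_one hV]

theorem one_sub_mul_mul_eq_zero_of_mul_eq_mul [DecidableEq m] {V : Matrix m r R}
    {A : Matrix m m R} {Λ : Matrix r r R} (hV : Vᵀ * V = 1) (hAV : A * V = V * Λ) :
    (1 - V * Vᵀ) * A * (V * Vᵀ) = 0 := by
  calc (1 - V * Vᵀ) * A * (V * Vᵀ) = (1 - V * Vᵀ) * (A * V) * Vᵀ := by
        simp only [Matrix.mul_assoc]
    _ = ((1 - V * Vᵀ) * V) * Λ * Vᵀ := by rw [hAV]; simp only [Matrix.mul_assoc]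
    _ = 0 := by rw [one_sub_mul_transpose_mul_eq_zero hV, Matrix.zero_mul, Matrix.zero_mul]

end Projector

theorem IsIdempotentElem.one_sub_mul_sub_mul {R : Type*} [Ring R] {G : R}
    (hG : IsIdempotentElem G) (M : R) : (1 - G) * (M - G) * G = (1 - G) * M * G := by
  rw [mul_sub, sub_mul, hG.one_sub_mul_self, zero_mul, sub_zero]

section SymPart

variable {p : ℕ}

theorem symPart_smul (c : ℝ) (M : Matrix (Fin p) (Fin p) ℝ) :
    symPart (c • M) = c • symPart M := by
  simp only [symPart, transpose_smul, ← smul_add, smul_comm c]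

theorem symPart_sum {ι : Type*} (s : Finset ι) (M : ι → Matrix (Fin p) (Fin p) ℝ) :
    symPart (∑ i ∈ s, M i) = ∑ i ∈ s, symPart (M i) := by
  simp only [symPart, transpose_sum, ← Finset.sum_add_distrib, Finset.smul_sum]

theorem symPart_zero : symPart (0 : Matrix (Fin p) (Fin p) ℝ) = 0 := by
  simp [symPart]

end SymPart

theorem projected_mean_is_RL_barycenter_grassmann_general {p k n : ℕ}
    (P : Fin n → Matrix (Fin p) (Fin p) ℝ)
    (Abar : Matrix (Fin p) (Fin p) ℝ)
    (hAbar : Abar = (1 / (n : ℝ)) • ∑ i, P i)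
    (Vk : Matrix (Fin p) (Fin k) ℝ) (Λ : Matrix (Fin k) (Fin k) ℝ)
    (hVk : Vkᵀ * Vk = 1) (heig : Abar * Vk = Vk * Λ)
    (G : Matrix (Fin p) (Fin p) ℝ) (hG : G = Vk * Vkᵀ) :
    (1 / (n : ℝ)) • ∑ i, (2 : ℝ) • symPart ((1 - G) * (P i - G) * G) = 0 := by
  have hGG : IsIdempotentElem G := hG ▸ isIdempotentElem_mul_transpose hVk
  have hmean : (1 / (n : ℝ)) • ∑ i, (1 - G) * (P i - G) * G = (1 - G) * Abar * G := by
    simp only [hGG.one_sub_mul_sub_mul, ← Finset.sum_mul, ← Finset.mul_sum,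
      hAbar, Matrix.mul_smul, Matrix.smul_mul]
  calc (1 / (n : ℝ)) • ∑ i, (2 : ℝ) • symPart ((1 - G) * (P i - G) * G)
      = (2 : ℝ) • symPart ((1 / (n : ℝ)) • ∑ i, (1 - G) * (P i - G) * G) := by
        rw [symPart_smul, symPart_sum, ← Finset.smul_sum, smul_comm]
    _ = 0 := by
        rw [hmean, hG, one_sub_mul_mul_eq_zero_of_mul_eq_mul hVk heig, symPart_zero, smul_zero]

/-- **The projected arithmetic mean is the `RL`-barycenter on Grassmann.**
If `P₁, …, Pₙ` are symmetric rank-`k` projectors with arithmetic mean `Ā`, and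
`Vk` has orthonormal columns which are eigenvectors of `Ā` (so `Ā Vk = Vk Λ`
with `Λ` diagonal), then with `G = Vk Vkᵀ` the average of the tangent-space
projection liftings vanishes: `(1/n)·Σᵢ 2·sym((I − G)(Pᵢ − G)G) = 0`. -/
theorem projected_mean_is_RL_barycenter_grassmann {p k n : ℕ} (hn : 0 < n)
    (P : Fin n → Matrix (Fin p) (Fin p) ℝ)
    (hPsym : ∀ i, (P i)ᵀ = P i)
    (hPproj : ∀ i, P i * P i = P i)
    (hPrank : ∀ i, (P i).rank = k)
    (Abar : Matrix (Fin p) (Fin p) ℝ)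
    (hAbar : Abar = (1 / (n : ℝ)) • ∑ i, P i)
    (Vk : Matrix (Fin p) (Fin k) ℝ) (Λ : Matrix (Fin k) (Fin k) ℝ)
    (hVk : Vkᵀ * Vk = 1) (hΛ : Λ.IsDiag) (heig : Abar * Vk = Vk * Λ)
    (G : Matrix (Fin p) (Fin p) ℝ) (hG : G = Vk * Vkᵀ) :
    (1 / (n : ℝ)) • ∑ i, (2 : ℝ) • symPart ((1 - G) * (P i - G) * G) = 0 :=
  projected_mean_is_RL_barycenter_grassmann_general P Abar hAbar Vk Λ hVk heig G hG
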